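/- In the setting of the previous construction (A a commutative ring, D an A-coalgebra, x an A-linear functional with 0 → A → D →∩x D → 0 exact, β₁ ∈ D with ε(β₁) = 1, β₁ ∩ x = 0, and βₙ ∈ D defined inductively with β_{n+1} ∩ x = βₙ and ε(βₙ) = 0 for n ≥ 2), assume additionally that for every d ∈ D there exists n ≥ 1 with d ∩ x^n = 0, where d ∩ x^n denotes the n-fold iterated cap product with x. Then the family (β₁, β₂, β₃, …) is a free A-module basis of D. -/

import Mathlib

open TensorProduct

/-- The cap product `d ∩ x = (1 ⊗ x)(Δ d)`, as a linear endomorphism of `D`. -/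
noncomputable def stmt12Cap {A D : Type*} [CommRing A] [AddCommGroup D] [Module A D]
    [Coalgebra A D] (x : D →ₗ[A] A) : D →ₗ[A] D :=
  (TensorProduct.rid A D).toLinearMap ∘ₗ (LinearMap.lTensor D x) ∘ₗ Coalgebra.comul

/-
The cap product with `x` lowers the index: `βₙ₊₁ ∩ x = βₙ` and `β₁ ∩ x = 0`, so `∩xᵏ` sends `βₙ₊₁`
to `βₙ₊₁₋ₖ` or to `0`. Applying `∩xᵐ` to a vanishing combination whose largest index is `m`
leaves only its top coefficient times `β₁`, which must vanish since `a ↦ a • β₁` is injective;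
this gives linear independence. For spanning, induct on the `n` with `d ∩ xⁿ = 0`: if `d ∩ x`
lies in the span then so does `d`, because `d ∩ x = e ∩ x` for some `e` in the span and
`d - e` lies in the kernel of `∩x`, which is `A β₁`.
-/

section LoweringChain

variable {R M : Type*}

section Semiring

variable [Semiring R] [AddCommMonoid M] [Module R M] {C : Module.End R M} {b : ℕ → M}

theorem pow_apply_of_lowering (h0 : C (b 0) = 0) (hsucc : ∀ n, C (b (n + 1)) = b n) (k n : ℕ) :
    (C ^ k) (b n) = if k ≤ n then b (n - k) else 0 := by
  induction k generalizing n with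
  | zero => simp
  | succ k ih =>
    rw [pow_succ, Module.End.mul_apply]
    cases n with
    | zero => simp [h0]
    | succ n => simp [hsucc n, ih n]

theorem pow_sum_of_lowering_of_lt (h0 : C (b 0) = 0) (hsucc : ∀ n, C (b (n + 1)) = b n)
    {m : ℕ} {s : Finset ℕ} (hs : ∀ i ∈ s, i < m) (g : ℕ → R) :
    (C ^ m) (∑ i ∈ insert m s, g i • b i) = g m • b 0 := by
  have hm : m ∉ s := fun h => (hs m h).false
  have htail : (C ^ m) (∑ i ∈ s, g i • b i) = 0 := by
    rw [map_sum]
    refine Finset.sum_eq_zero fun i hi => ?_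
    rw [map_smul, pow_apply_of_lowering h0 hsucc, if_neg (by grind), smul_zero]
  rw [Finset.sum_insert hm, map_add, htail, add_zero, map_smul, pow_apply_of_lowering h0 hsucc,
    if_pos le_rfl, Nat.sub_self]

end Semiring

section Ring

variable [Ring R] [AddCommGroup M] [Module R M] {C : Module.End R M} {b : ℕ → M}

theorem linearIndependent_of_lowering (h0 : C (b 0) = 0) (hsucc : ∀ n, C (b (n + 1)) = b n)
    (hinj : Function.Injective fun a : R => a • b 0) : LinearIndependent R b := by
  rw [linearIndependent_iff']
  intro s g
  induction s using Finset.induction_on_max with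
  | empty => simp
  | insert m s hs ih =>
    intro hsum
    have hgm : g m = 0 :=
      hinj <| by simpa [hsum] using (pow_sum_of_lowering_of_lt h0 hsucc hs g).symm
    rw [Finset.sum_insert fun h => (hs m h).false, hgm, zero_smul, zero_add] at hsum
    intro i hi
    rcases Finset.mem_insert.1 hi with rfl | hi
    · exact hgm
    · exact ih hsum i hi

theorem mem_span_of_lowering_of_apply_mem (hsucc : ∀ n, C (b (n + 1)) = b n)
    (hker : LinearMap.ker C ≤ R ∙ b 0) {d : M} (hd : C d ∈ Submodule.span R (Set.range b)) :
    d ∈ Submodule.span R (Set.range b) := by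
  set S := Submodule.span R (Set.range b)
  have hS : S ≤ S.map C := by
    rw [Submodule.span_le]
    rintro _ ⟨n, rfl⟩
    exact ⟨b (n + 1), Submodule.subset_span ⟨n + 1, rfl⟩, hsucc n⟩
  obtain ⟨e, he, hCe⟩ := hS hd
  have hde : d - e ∈ R ∙ b 0 := hker <| by simp [hCe]
  have hb0 : R ∙ b 0 ≤ S := Submodule.span_mono <| by simp
  simpa using S.add_mem (hb0 hde) he

theorem mem_span_of_lowering_of_pow_apply_eq_zero (hsucc : ∀ n, C (b (n + 1)) = b n)
    (hker : LinearMap.ker C ≤ R ∙ b 0) {n : ℕ} {d : M} (hd : (C ^ n) d = 0) :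
    d ∈ Submodule.span R (Set.range b) := by
  induction n generalizing d with
  | zero => simp_all
  | succ n ih =>
    rw [pow_succ, Module.End.mul_apply] at hd
    exact mem_span_of_lowering_of_apply_mem hsucc hker (ih hd)

end Ring

end LoweringChain

theorem stmt_12_general {A D : Type*} [CommRing A] [AddCommGroup D] [Module A D] [Coalgebra A D]
    (x : D →ₗ[A] A) (β : ℕ → D)
    (hβx : stmt12Cap x (β 1) = 0)
    (hinj : Function.Injective fun a : A => a • β 1)
    (hker : ∀ d : D, stmt12Cap x d = 0 ↔ ∃ a : A, d = a • β 1)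
    (hrec : ∀ n, 1 ≤ n → stmt12Cap x (β (n + 1)) = β n)
    (hnil : ∀ d : D, ∃ n : ℕ, (stmt12Cap x ^ n) d = 0) :
    ∃ bb : Module.Basis ℕ A D, ∀ n, bb n = β (n + 1) := by
  have hsucc : ∀ n, stmt12Cap x (β (n + 1 + 1)) = β (n + 1) := fun n => hrec (n + 1) (by omega)
  have hker' : LinearMap.ker (stmt12Cap x) ≤ A ∙ β (0 + 1) := fun d hd => by
    obtain ⟨a, rfl⟩ := (hker d).1 hd
    exact Submodule.smul_mem _ a (Submodule.mem_span_singleton_self _)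
  have hli := linearIndependent_of_lowering (b := fun n => β (n + 1)) hβx hsucc hinj
  have hspan : ⊤ ≤ Submodule.span A (Set.range fun n => β (n + 1)) := fun d _ =>
    let ⟨_, hn⟩ := hnil d
    mem_span_of_lowering_of_pow_apply_eq_zero (b := fun n => β (n + 1)) hsucc hker' hn
  exact ⟨Module.Basis.mk hli hspan, fun n => Module.Basis.mk_apply hli hspan n⟩

/-- Setting as in the previous statement: `D` a cocommutative counital `A`-coalgebra,
`x` a linear functional with `0 → A → D →(∩x) D → 0` exact, and the canonical family
`βₙ` (here given as a hypothesis family `β (n)` for `n ≥ 1`, with `ε(β 1) = 1`,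
`β 1 ∩ x = 0`, `β (n+1) ∩ x = β n`, `ε(β n) = 0` for `n ≥ 2`).  Assume local
nilpotence: every `d ∈ D` satisfies `d ∩ xⁿ = 0` for some `n`.  Then `(βₙ)_{n ≥ 1}`
is a free `A`-module basis of `D`. -/
theorem stmt_12 {A D : Type*} [CommRing A] [AddCommGroup D] [Module A D] [Coalgebra A D]
    (hcocomm : ∀ d : D, TensorProduct.comm A D D (Coalgebra.comul d) = Coalgebra.comul d)
    (x : D →ₗ[A] A) (β : ℕ → D)
    (hβε : Coalgebra.counit (R := A) (β 1) = 1) (hβx : stmt12Cap x (β 1) = 0)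
    (hinj : Function.Injective fun a : A => a • β 1)
    (hker : ∀ d : D, stmt12Cap x d = 0 ↔ ∃ a : A, d = a • β 1)
    (hsurj : Function.Surjective (stmt12Cap x))
    (hrec : ∀ n, 1 ≤ n → stmt12Cap x (β (n + 1)) = β n)
    (hε : ∀ n, 2 ≤ n → Coalgebra.counit (R := A) (β n) = 0)
    (hnil : ∀ d : D, ∃ n : ℕ, (stmt12Cap x ^ n) d = 0) :
    ∃ bb : Module.Basis ℕ A D, ∀ n, bb n = β (n + 1) :=
  stmt_12_general x β hβx hinj hker hrec hnil
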